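/- arXiv:2212.14752 — 2 statements merged into one kernel-verified Lean document; each statement's English description precedes it below -/
import Mathlib

section
/- Let X ∈ ℂ^{3×7} be a matrix whose columns satisfy: column 1 is nonzero, and the triples of columns {1,2,3}, {1,4,5}, {1,6,7} are each linearly dependent (i.e., the corresponding 3×3 determinants vanish). Then the determinantal identity [234][567] − [235][467] = 0 holds, where [ijk] denotes the determinant of columns i,j,k of X. -/
/-- Six points on three concurrent lines: if column 1 of `X ∈ ℂ^{3×7}` is nonzero and the
column triples `{1,2,3}`, `{1,4,5}`, `{1,6,7}` are each linearly dependent, then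
`[234][567] − [235][467] = 0` (columns indexed from 1 in the informal statement,
from 0 here). -/
theorem stmt_12 (X : Matrix (Fin 3) (Fin 7) ℂ)
    (h1 : (fun i => X i 0) ≠ 0)
    (h123 : (X.submatrix id ![0, 1, 2]).det = 0)
    (h145 : (X.submatrix id ![0, 3, 4]).det = 0)
    (h167 : (X.submatrix id ![0, 5, 6]).det = 0) :
    (X.submatrix id ![1, 2, 3]).det * (X.submatrix id ![4, 5, 6]).det -
      (X.submatrix id ![1, 2, 4]).det * (X.submatrix id ![3, 5, 6]).det = 0 := by
  have hne : ∃ i, X i 0 ≠ 0 := by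
    by_contra h
    push_neg at h
    exact h1 (funext fun i => h i)
  obtain ⟨i, hi⟩ := hne
  simp only [Matrix.det_fin_three, Matrix.submatrix_apply, id_eq, Matrix.cons_val_zero,
    Matrix.cons_val_one, Matrix.head_cons, Matrix.cons_val_two, Matrix.tail_cons]
    at h123 h145 h167 ⊢
  apply mul_left_cancel₀ hi
  rw [mul_zero]
  fin_cases i <;>
    simp only [Fin.zero_eta, Fin.mk_one, Fin.reduceFinMk, Fin.isValue]
  · linear_combination (- X 0 3*X 0 5*X 1 4*X 2 6 + X 0 3*X 0 6*X 1 4*X 2 5 + X 0 3*X 0 5*X 1 6*X 2 4 - X 0 3*X 0 6*X 1 5*X 2 4 + X 0 4*X 0 5*X 1 3*X 2 6 - X 0 4*X 0 6*X 1 3*X 2 5 - X 0 4*X 0 5*X 1 6*X 2 3 + X 0 4*X 0 6*X 1 5*X 2 3) * h123 + (X 0 1*X 0 5*X 1 2*X 2 6 - X 0 1*X 0 6*X 1 2*X 2 5 - X 0 1*X 0 5*X 1 6*X 2 2 + X 0 1*X 0 6*X 1 5*X 2 2 - X 0 2*X 0 5*X 1 1*X 2 6 + X 0 2*X 0 6*X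 1 1*X 2 5 + X 0 2*X 0 5*X 1 6*X 2 1 - X 0 2*X 0 6*X 1 5*X 2 1) * h145 + (- X 0 1*X 0 3*X 1 2*X 2 4 + X 0 1*X 0 4*X 1 2*X 2 3 + X 0 1*X 0 3*X 1 4*X 2 2 - X 0 1*X 0 4*X 1 3*X 2 2 + X 0 2*X 0 3*X 1 1*X 2 4 - X 0 2*X 0 4*X 1 1*X 2 3 - X 0 2*X 0 3*X 1 4*X 2 1 + X 0 2*X 0 4*X 1 3*X 2 1) * h167
  · linear_combination (- X 0 3*X 1 4*X 1 5*X 2 6 + X 0 3*X 1 4*X 1 6*X 2 5 + X 0 4*X 1 3*X 1 5*X 2 6 - X 0 4*X 1 3*X 1 6*X 2 5 + X 0 5*X 1 3*X 1 6*X 2 4 - X 0 6*X 1 3*X 1 5*X 2 4 - X 0 5*X 1 4*X 1 6*X 2 3 + X 0 6*X 1 4*X 1 5*X 2 3) * h123 + (X 0 1*X 1 2*X 1 5*X 2 6 - X 0 1*X 1 2*X 1 6*X 2 5 - X 0 2*X 1 1*X 1 5*X 2 6 + X 0 2*X 1 1*X 1 6*X 2 5 - X 0 5*X 1 1*X 1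 6*X 2 2 + X 0 6*X 1 1*X 1 5*X 2 2 + X 0 5*X 1 2*X 1 6*X 2 1 - X 0 6*X 1 2*X 1 5*X 2 1) * h145 + (- X 0 1*X 1 2*X 1 3*X 2 4 + X 0 1*X 1 2*X 1 4*X 2 3 + X 0 2*X 1 1*X 1 3*X 2 4 - X 0 2*X 1 1*X 1 4*X 2 3 + X 0 3*X 1 1*X 1 4*X 2 2 - X 0 4*X 1 1*X 1 3*X 2 2 - X 0 3*X 1 2*X 1 4*X 2 1 + X 0 4*X 1 2*X 1 3*X 2 1) * h167
  · linear_combination (- X 0 3*X 1 5*X 2 4*X 2 6 + X 0 3*X 1 6*X 2 4*X 2 5 + X 0 5*X 1 3*X 2 4*X 2 6 - X 0 6*X 1 3*X 2 4*X 2 5 + X 0 4*X 1 5*X 2 3*X 2 6 - X 0 4*X 1 6*X 2 3*X 2 5 - X 0 5*X 1 4*X 2 3*X 2 6 + X 0 6*X 1 4*X 2 3*X 2 5) * h123 + (X 0 1*X 1 5*X 2 2*X 2 6 - X 0 1*X 1 6*X 2 2*X 2 5 - X 0 5*X 1 1*X 2 2*X 2 6 + X 0 6*X 1 1*X 2 2*X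 2 5 - X 0 2*X 1 5*X 2 1*X 2 6 + X 0 2*X 1 6*X 2 1*X 2 5 + X 0 5*X 1 2*X 2 1*X 2 6 - X 0 6*X 1 2*X 2 1*X 2 5) * h145 + (- X 0 1*X 1 3*X 2 2*X 2 4 + X 0 1*X 1 4*X 2 2*X 2 3 + X 0 3*X 1 1*X 2 2*X 2 4 - X 0 4*X 1 1*X 2 2*X 2 3 + X 0 2*X 1 3*X 2 1*X 2 4 - X 0 2*X 1 4*X 2 1*X 2 3 - X 0 3*X 1 2*X 2 1*X 2 4 + X 0 4*X 1 2*X 2 1*X 2 3) * h167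
end

section
/- The ideal ⟨[123],[145],[167]⟩ of 3×3 minors in ℂ[x_{1,1},...,x_{3,7}] (minors taken of the 3×7 generic matrix on the column triples {1,2,3},{1,4,5},{1,6,7}) contains neither [234][567] − [235][467] nor the variables x_{1,1}, x_{2,1}, x_{3,1}, but its zero set is the union of the zero set of ⟨x_{1,1},x_{2,1},x_{3,1}⟩ and the zero set of ⟨[123],[145],[167],[234][567]−[235][467]⟩. -/
open MvPolynomial

/-- The `3×3` minor of the generic `3×7` matrix on columns `a, b, c`. -/
noncomputable def genMinor (a b c : Fin 7) : MvPolynomial (Fin 3 × Fin 7) ℂ :=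
  ((Matrix.of fun i j => (X (i, j) : MvPolynomial (Fin 3 × Fin 7) ℂ)).submatrix
      id ![a, b, c]).det

/-!
Cofactor expansion along the first column puts every minor `[0ab]` into the ideal of the
entries of column `0`, so `V(x_{·,0}) ⊆ V(I)`. Conversely, combining the expansions
`x_{i,0} [abc] = x_{i,a} [0bc] - x_{i,b} [0ac] + x_{i,c} [0ab]` with the three-term Plücker
relations among the minors `[0ab]` gives `x_{i,0}² q ∈ I` for every row `i`, so `q` vanishes
on the part of `V(I)` where the first column is nonzero. The non-memberships are witnessed by
points of `V(I)` at which `q`, resp. `x_{i,0}`, does not vanish.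
-/

section ColMinor

variable {R ι : Type*} [CommRing R] (M : Matrix (Fin 3) ι R)

def colMinor (a b c : ι) : R :=
  (M.submatrix id ![a, b, c]).det

lemma colMinor_eq (a b c : ι) : colMinor M a b c =
    M 0 a * M 1 b * M 2 c - M 0 a * M 1 c * M 2 b - M 0 b * M 1 a * M 2 c
      + M 0 b * M 1 c * M 2 a + M 0 c * M 1 a * M 2 b - M 0 c * M 1 b * M 2 a := by
  simp [colMinor, Matrix.det_fin_three]

lemma colMinor_mem_span_column (k a b : ι) :
    colMinor M k a b ∈ Ideal.span {M 0 k, M 1 k, M 2 k} :=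
  Submodule.mem_span_triple.mpr ⟨M 1 a * M 2 b - M 1 b * M 2 a,
    M 0 b * M 2 a - M 0 a * M 2 b, M 0 a * M 1 b - M 0 b * M 1 a,
    by simp only [colMinor_eq, smul_eq_mul]; ring⟩

lemma mul_colMinor (i : Fin 3) (k a b c : ι) :
    M i k * colMinor M a b c =
      M i a * colMinor M k b c - M i b * colMinor M k a c + M i c * colMinor M k a b := by
  fin_cases i <;> simp [colMinor_eq] <;> ring

lemma colMinor_plucker (k a b c d : ι) :
    colMinor M k a b * colMinor M k c d - colMinor M k a c * colMinor M k b d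
      + colMinor M k a d * colMinor M k b c = 0 := by
  simp only [colMinor_eq]; ring

lemma sq_mul_colMinor_sub_mem (i : Fin 3) (k a b c d e f : ι) :
    M i k ^ 2 * (colMinor M a b c * colMinor M d e f - colMinor M a b d * colMinor M c e f) ∈
      Ideal.span {colMinor M k a b, colMinor M k c d, colMinor M k e f} := by
  set x := M i
  set m := colMinor M k
  refine Submodule.mem_span_triple.mpr
    ⟨x c * (x f * m d e - x e * m d f) - x d * (x f * m c e - x e * m c f),
      x a * x e * m b f - x a * x f * m b e - x b * x e * m a f + x b * x f * m a e,
      x d * (x a * m b c - x b * m a c) - x c * (x a * m b d - x b * m a d), ?_⟩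
  simp only [smul_eq_mul]
  symm
  linear_combination (x k * colMinor M d e f) * mul_colMinor M i k a b c
    + (x a * m b c - x b * m a c + x c * m a b) * mul_colMinor M i k d e f
    - (x k * colMinor M c e f) * mul_colMinor M i k a b d
    - (x a * m b d - x b * m a d + x d * m a b) * mul_colMinor M i k c e f
    - (x a * x e) * colMinor_plucker M k b c d f + (x a * x f) * colMinor_plucker M k b c d e
    + (x b * x e) * colMinor_plucker M k a c d f - (x b * x f) * colMinor_plucker M k a c d e

end ColMinor

lemma eval_genMinor (x : Fin 3 × Fin 7 → ℂ) (a b c : Fin 7) :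
    eval x (genMinor a b c) = colMinor (Matrix.of fun i j => x (i, j)) a b c := by
  change eval x (colMinor _ a b c) = _
  simp [colMinor_eq]

lemma span_genMinor_le_span_column :
    Ideal.span {genMinor 0 1 2, genMinor 0 3 4, genMinor 0 5 6} ≤
      Ideal.span {X (0, 0), X (1, 0), X (2, 0)} := by
  simp only [Ideal.span_le, Set.insert_subset_iff, Set.singleton_subset_iff, SetLike.mem_coe]
  let M : Matrix (Fin 3) (Fin 7) (MvPolynomial (Fin 3 × Fin 7) ℂ) := Matrix.of fun i j => X (i, j)
  exact ⟨colMinor_mem_span_column M 0 1 2, colMinor_mem_span_column M 0 3 4,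
    colMinor_mem_span_column M 0 5 6⟩

lemma sq_X_mul_genMinor_sub_mem (i : Fin 3) :
    X (i, 0) ^ 2 * (genMinor 1 2 3 * genMinor 4 5 6 - genMinor 1 2 4 * genMinor 3 5 6) ∈
      Ideal.span {genMinor 0 1 2, genMinor 0 3 4, genMinor 0 5 6} :=
  sq_mul_colMinor_sub_mem (Matrix.of fun i j => X (i, j)) i 0 1 2 3 4 5 6

lemma genMinor_sub_notMem_span :
    genMinor 1 2 3 * genMinor 4 5 6 - genMinor 1 2 4 * genMinor 3 5 6 ∉
      Ideal.span {genMinor 0 1 2, genMinor 0 3 4, genMinor 0 5 6} := by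
  let x : Fin 3 × Fin 7 → ℂ := fun v =>
    !![0, 1, 0, 0, 1, 0, 0; 0, 0, 1, 0, 0, 1, 0; 0, 0, 0, 1, 0, 0, 1] v.1 v.2
  have hx : x ∈ zeroLocus ℂ (Ideal.span {genMinor 0 1 2, genMinor 0 3 4, genMinor 0 5 6}) :=
    zeroLocus_anti_mono span_genMinor_le_span_column (by simp [zeroLocus_span, x])
  intro hq
  simpa [eval_genMinor, colMinor_eq, x] using hx _ hq

lemma X_notMem_span_genMinor (i : Fin 3) :
    X (i, 0) ∉ Ideal.span {genMinor 0 1 2, genMinor 0 3 4, genMinor 0 5 6} := by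
  let x : Fin 3 × Fin 7 → ℂ := fun v => if v.2 = 0 then 1 else 0
  have hx : x ∈ zeroLocus ℂ (Ideal.span {genMinor 0 1 2, genMinor 0 3 4, genMinor 0 5 6}) := by
    simp [zeroLocus_span, eval_genMinor, colMinor_eq, x]
  intro hi
  simpa [x] using hx _ hi

/-- The ideal `⟨[123],[145],[167]⟩` contains neither `[234][567] − [235][467]` nor the
entries of the first column, but its zero set is the union of
`V(⟨x_{1,1},x_{2,1},x_{3,1}⟩)` and `V(⟨[123],[145],[167],[234][567]−[235][467]⟩)`
(columns indexed from 0 here). -/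
theorem stmt_13 :
    let I : Ideal (MvPolynomial (Fin 3 × Fin 7) ℂ) :=
      Ideal.span {genMinor 0 1 2, genMinor 0 3 4, genMinor 0 5 6}
    let q : MvPolynomial (Fin 3 × Fin 7) ℂ :=
      genMinor 1 2 3 * genMinor 4 5 6 - genMinor 1 2 4 * genMinor 3 5 6
    q ∉ I ∧ (∀ i : Fin 3, (X (i, 0) : MvPolynomial (Fin 3 × Fin 7) ℂ) ∉ I) ∧
      zeroLocus ℂ I =
        zeroLocus ℂ (Ideal.span {(X ((0 : Fin 3), (0 : Fin 7)) : MvPolynomial (Fin 3 × Fin 7) ℂ),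
            X ((1 : Fin 3), (0 : Fin 7)), X ((2 : Fin 3), (0 : Fin 7))}) ∪
          zeroLocus ℂ (Ideal.span {genMinor 0 1 2, genMinor 0 3 4, genMinor 0 5 6, q}) := by
  intro I q
  refine ⟨genMinor_sub_notMem_span, X_notMem_span_genMinor, ?_⟩
  refine Set.Subset.antisymm (fun x hx => ?_)
    (Set.union_subset (zeroLocus_anti_mono span_genMinor_le_span_column)
      (zeroLocus_anti_mono (Ideal.span_mono (by simp [Set.insert_subset_iff]))))
  by_cases hcol : ∀ i : Fin 3, x (i, 0) = 0
  · left
    simp [zeroLocus_span, hcol]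
  · right
    obtain ⟨i, hi⟩ := not_forall.mp hcol
    have hxq : aeval x q = 0 := by
      simpa [q, hi] using hx _ (sq_X_mul_genMinor_sub_mem i)
    rw [zeroLocus_span]
    rintro p (rfl | rfl | rfl | rfl)
    exacts [hx _ (Ideal.subset_span (by simp)), hx _ (Ideal.subset_span (by simp)),
      hx _ (Ideal.subset_span (by simp)), hxq]
end
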